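/- Let ψ0 and ψ1 be the substitutions on {a,b,c} defined by ψ0: a ↦ abac, b ↦ aba, c ↦ ab and ψ1: a ↦ acab, b ↦ aab, c ↦ ab, with one-sided fixed points v0 = ψ0(v0) and v1 = ψ1(v1) (both beginning with a). Let ν be the substitution on C = {0,1,...,11} determined by 0 ↦ 0123, 1 ↦ 0, 2 ↦ 405678, 3 ↦ 04, 4 ↦ 0·9·10, 5 ↦ 0·4·0·11·0·4, 6 ↦ 0, 7 ↦ 0·4·0·11, 8 ↦ 04, 9 ↦ 0, 10 ↦ 127623, 11 ↦ 04, with one-sided fixed point w' (beginning with 0), and let π': C → {a,b,c} × {a,b,c} × ℤ be given by 0 ↦ (a,a,0), 1 ↦ (b,c,0), 2 ↦ (a,a,−1), 3 ↦ (c,b,−1), 4 ↦ (b,b,0), 5 ↦ (a,c,0), 6 ↦ (b,a,−2), 7 ↦ (a,b,−1), 8 ↦ (c,a,−2), 9 ↦ (b,a,0), 10 ↦ (a,b,1), 11 ↦ (c,c,0). Then the sequence π'(w') simultaneously encodes v0 and v1: (i) for each i ∈ {0,1} and all n ≥ 0, v_i[n] equals the i-th component of π'(w'[n]); and (ii) for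 all n ≥ 0, the brick π'(w'[n]) = (x0, x1, s) joins with the brick π'(w'[n+1]) = (y0, y1, t) with respect to (ψ0, ψ1), i.e., |ψ0(x0)| − s − |ψ1(x1)| + t = 0. -/

import Mathlib

/-!
The letter-to-letter projections `fᵢ = prᵢ ∘ π'` do not intertwine `ν` with `ψᵢ`, but they do
after one application of `ν`: `fᵢ ∘ ν² = ψᵢ ∘ fᵢ ∘ ν` on every letter of `C`, and
`fᵢ(ν(0)) = ψᵢ(a)`. Hence `fᵢ(νᵏ(0)) = ψᵢᵏ(a)` for all `k`; both sides are prefixes of the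
respective fixed points, and `|νᵏ(0)| > k`, so `fᵢ(w') = vᵢ`. The join condition holds between
consecutive letters inside every `ν(c)` and across every boundary `ν(c) ν(c')`, so it holds
along every word `ν(u)`, in particular along the prefixes `νᵏ(0)` of `w'`.
-/

/-- The alphabet `{a, b, c}`. -/
inductive A : Type
  | a | b | c
deriving DecidableEq, Repr

/-- The substitution `ψ0 : a ↦ abac, b ↦ aba, c ↦ ab`. -/
def psi0 : A → List A
  | A.a => [A.a, A.b, A.a, A.c]
  | A.b => [A.a, A.b, A.a]
  | A.c => [A.a, A.b]

/-- The substitution `ψ1 : a ↦ acab, b ↦ aab, c ↦ ab`. -/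
def psi1 : A → List A
  | A.a => [A.a, A.c, A.a, A.b]
  | A.b => [A.a, A.a, A.b]
  | A.c => [A.a, A.b]

/-- The action of a morphism (given by its values on letters) on finite words. -/
def applyMorphism {α β : Type*} (φ : α → List β) (l : List α) : List β :=
  l.flatMap φ

/-- The prefix `u[:n]` of length `n` of an infinite word `u`. -/
def pref {α : Type*} (u : ℕ → α) (n : ℕ) : List α :=
  (List.range n).map u

/-- A finite word `l` is a prefix of the infinite word `u`. -/
def PrefixOfSeq {α : Type*} (l : List α) (u : ℕ → α) : Prop :=
  ∀ i : ℕ, ∀ h : i < l.length, l.get ⟨i, h⟩ = u i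

/-- The infinite word `u` is a (one-sided) fixed point of the substitution `φ`,
i.e. `φ(u) = u`: the image of every prefix of `u` is again a prefix of `u`. -/
def IsFixedPointOf {α : Type*} (φ : α → List α) (u : ℕ → α) : Prop :=
  ∀ n : ℕ, PrefixOfSeq (applyMorphism φ (pref u n)) u

/-- A brick over `{a, b, c}`. -/
abbrev Brick : Type := A × A × ℤ

/-- The brick `(x0, x1, s)` joins with the brick `(y0, y1, t)` with respect to
`(ψ0, ψ1)` if `|ψ0(x0)| − s − |ψ1(x1)| + t = 0`. -/
def Joins (b0 b1 : Brick) : Prop :=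
  ((psi0 b0.1).length : ℤ) - b0.2.2 - ((psi1 b0.2.1).length : ℤ) + b1.2.2 = 0

/-- The substitution `ν` over `C = {0, 1, …, 11}`. -/
def nu : Fin 12 → List (Fin 12)
  | 0 => [0, 1, 2, 3]
  | 1 => [0]
  | 2 => [4, 0, 5, 6, 7, 8]
  | 3 => [0, 4]
  | 4 => [0, 9, 10]
  | 5 => [0, 4, 0, 11, 0, 4]
  | 6 => [0]
  | 7 => [0, 4, 0, 11]
  | 8 => [0, 4]
  | 9 => [0]
  | 10 => [1, 2, 7, 6, 2, 3]
  | 11 => [0, 4]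

/-- The map `π' : C → B({a, b, c})`. -/
def piB' : Fin 12 → Brick
  | 0 => (A.a, A.a, 0)
  | 1 => (A.b, A.c, 0)
  | 2 => (A.a, A.a, -1)
  | 3 => (A.c, A.b, -1)
  | 4 => (A.b, A.b, 0)
  | 5 => (A.a, A.c, 0)
  | 6 => (A.b, A.a, -2)
  | 7 => (A.a, A.b, -1)
  | 8 => (A.c, A.a, -2)
  | 9 => (A.b, A.a, 0)
  | 10 => (A.a, A.b, 1)
  | 11 => (A.c, A.c, 0)

instance : DecidableRel Joins := fun b0 b1 =>
  inferInstanceAs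
    (Decidable (((psi0 b0.1).length : ℤ) - b0.2.2 - ((psi1 b0.2.1).length : ℤ) + b1.2.2 = 0))

section Substitution

variable {α β : Type*}

@[simp] lemma applyMorphism_nil (φ : α → List β) : applyMorphism φ [] = [] := rfl

@[simp] lemma applyMorphism_cons (φ : α → List β) (a : α) (l : List α) :
    applyMorphism φ (a :: l) = φ a ++ applyMorphism φ l :=
  List.flatMap_cons

lemma applyMorphism_append (φ : α → List β) (l l' : List α) :
    applyMorphism φ (l ++ l') = applyMorphism φ l ++ applyMorphism φ l' :=
  List.flatMap_append

lemma length_le_length_applyMorphism {φ : α → List β} (hφ : ∀ a, φ a ≠ []) (l : List α) :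
    l.length ≤ (applyMorphism φ l).length := by
  induction l with
  | nil => rfl
  | cons a l ih =>
    have := List.length_pos_iff.2 (hφ a)
    simp only [applyMorphism_cons, List.length_append, List.length_cons]
    omega

lemma lt_length_iterate_applyMorphism {σ : α → List α} (hσ : ∀ a, σ a ≠ []) {a : α}
    {t : List α} (ha : σ a = a :: t) (ht : t ≠ []) (k : ℕ) :
    k < ((applyMorphism σ)^[k] [a]).length := by
  suffices ∃ s, (applyMorphism σ)^[k] [a] = a :: s ∧ k ≤ s.length by
    obtain ⟨s, hs, hk⟩ := this
    simp only [hs, List.length_cons]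
    omega
  induction k with
  | zero => exact ⟨[], rfl, le_rfl⟩
  | succ k ih =>
    obtain ⟨s, hs, hk⟩ := ih
    refine ⟨t ++ applyMorphism σ s, ?_, ?_⟩
    · rw [Function.iterate_succ_apply', hs, applyMorphism_cons, ha, List.cons_append]
    · have := List.length_pos_iff.2 ht
      have := length_le_length_applyMorphism hσ s
      simp only [List.length_append]
      omega

lemma isChain_applyMorphism {R : α → α → Prop} {σ : α → List α} (hσ : ∀ a, σ a ≠ [])
    (hin : ∀ a, (σ a).IsChain R)
    (hout : ∀ a b, ∀ x ∈ (σ a).getLast?, ∀ y ∈ (σ b).head?, R x y) (l : List α) :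
    (applyMorphism σ l).IsChain R := by
  induction l with
  | nil => exact .nil
  | cons a l ih =>
    rw [applyMorphism_cons]
    refine (hin a).append ih fun x hx y hy => ?_
    cases l with
    | nil => simp at hy
    | cons b l =>
      rw [applyMorphism_cons, List.head?_append_of_ne_nil _ (hσ b)] at hy
      exact hout a b x hx y hy

lemma applyMorphism_applyMorphism_map {σ : α → List α} {ψ : β → List β} {f : α → β}
    (hconj : ∀ a, (applyMorphism σ (σ a)).map f = applyMorphism ψ ((σ a).map f))
    (l : List α) :
    (applyMorphism σ (applyMorphism σ l)).map f = applyMorphism ψ ((applyMorphism σ l).map f) := by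
  induction l with
  | nil => rfl
  | cons a l ih =>
    rw [applyMorphism_cons, applyMorphism_append, List.map_append, hconj, ih, List.map_append,
      applyMorphism_append]

lemma map_iterate_applyMorphism {σ : α → List α} {ψ : β → List β} {f : α → β} {a : α}
    (hbase : (σ a).map f = ψ (f a))
    (hconj : ∀ a, (applyMorphism σ (σ a)).map f = applyMorphism ψ ((σ a).map f)) (k : ℕ) :
    ((applyMorphism σ)^[k] [a]).map f = (applyMorphism ψ)^[k] [f a] := by
  have key : ∀ k l, ((applyMorphism σ)^[k] (applyMorphism σ l)).map f
      = (applyMorphism ψ)^[k] ((applyMorphism σ l).map f) := by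
    intro k
    induction k with
    | zero => exact fun _ => rfl
    | succ k ih =>
      intro l
      rw [Function.iterate_succ_apply, ih, applyMorphism_applyMorphism_map hconj,
        ← Function.iterate_succ_apply]
  cases k with
  | zero => rfl
  | succ k =>
    rw [Function.iterate_succ_apply, key, Function.iterate_succ_apply]
    simp [applyMorphism, hbase]

end Substitution

section FixedPoint

variable {α β : Type*}

lemma prefixOfSeq_iff_pref_eq {l : List α} {u : ℕ → α} :
    PrefixOfSeq l u ↔ pref u l.length = l := by
  refine ⟨fun h => List.ext_getElem (by simp [pref]) fun i _ hi => ?_, fun h i hi => ?_⟩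
  · simpa [pref] using (h i hi).symm
  · simpa [pref] using List.getElem_of_eq h.symm hi

lemma PrefixOfSeq.apply_eq_of_map {l : List α} {w : ℕ → α} {v : ℕ → β} {f : α → β}
    (hw : PrefixOfSeq l w) (hv : PrefixOfSeq (l.map f) v) {n : ℕ} (hn : n < l.length) :
    v n = f (w n) := by
  rw [← hv n (by simpa using hn), ← hw n hn]
  simp

lemma PrefixOfSeq.rel_of_isChain {R : α → α → Prop} {l : List α} {w : ℕ → α}
    (hw : PrefixOfSeq l w) (hR : l.IsChain R) {n : ℕ} (hn : n + 1 < l.length) :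
    R (w n) (w (n + 1)) := by
  rw [← hw n (by omega), ← hw (n + 1) hn]
  exact hR.getElem n hn

lemma IsFixedPointOf.prefixOfSeq_iterate {φ : α → List α} {u : ℕ → α}
    (hu : IsFixedPointOf φ u) (k : ℕ) : PrefixOfSeq ((applyMorphism φ)^[k] [u 0]) u := by
  induction k with
  | zero =>
    intro i hi
    simp only [Function.iterate_zero, id, List.length_singleton, Nat.lt_one_iff] at hi
    subst hi
    rfl
  | succ k ih =>
    rw [Function.iterate_succ_apply', ← prefixOfSeq_iff_pref_eq.1 ih]
    exact hu _

lemma IsFixedPointOf.apply_eq_of_map_iterate {σ : α → List α} {ψ : β → List β} {f : α → β}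
    {w : ℕ → α} {v : ℕ → β} (hw : IsFixedPointOf σ w) (hv : IsFixedPointOf ψ v)
    (hw0 : f (w 0) = v 0) (hbase : (σ (w 0)).map f = ψ (v 0))
    (hconj : ∀ a, (applyMorphism σ (σ a)).map f = applyMorphism ψ ((σ a).map f))
    (hlen : ∀ k, k < ((applyMorphism σ)^[k] [w 0]).length) (n : ℕ) :
    v n = f (w n) := by
  refine (hw.prefixOfSeq_iterate n).apply_eq_of_map ?_ (hlen n)
  rw [map_iterate_applyMorphism (hw0 ▸ hbase) hconj, hw0]
  exact hv.prefixOfSeq_iterate n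

end FixedPoint

lemma nu_ne_nil : ∀ c, nu c ≠ [] := by decide

lemma map_fst_nu_nu : ∀ c, (applyMorphism nu (nu c)).map (fun x => (piB' x).1)
    = applyMorphism psi0 ((nu c).map fun x => (piB' x).1) := by
  decide

lemma map_snd_fst_nu_nu : ∀ c, (applyMorphism nu (nu c)).map (fun x => (piB' x).2.1)
    = applyMorphism psi1 ((nu c).map fun x => (piB' x).2.1) := by
  decide

lemma isChain_joins_nu : ∀ c, (nu c).IsChain fun x y => Joins (piB' x) (piB' y) := by
  decide

lemma joins_getLast_nu_head_nu :
    ∀ c c', ∀ x ∈ (nu c).getLast?, ∀ y ∈ (nu c').head?, Joins (piB' x) (piB' y) := by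
  decide

/-- The sequence `π'(w')` simultaneously encodes the fixed points `v0` and `v1`
of `ψ0` and `ψ1`: projecting onto the `i`-th components recovers `v_i`, and any
two consecutive bricks join with respect to `(ψ0, ψ1)`. -/
theorem simultaneous_encoding_example2
    (v0 v1 : ℕ → A)
    (hv0 : v0 0 = A.a) (hfix0 : IsFixedPointOf psi0 v0)
    (hv1 : v1 0 = A.a) (hfix1 : IsFixedPointOf psi1 v1)
    (w' : ℕ → Fin 12)
    (hw0 : w' 0 = 0) (hfixw : IsFixedPointOf nu w') :
    (∀ n : ℕ, v0 n = (piB' (w' n)).1 ∧ v1 n = (piB' (w' n)).2.1) ∧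
    (∀ n : ℕ, Joins (piB' (w' n)) (piB' (w' (n + 1)))) := by
  have hlen : ∀ k, k < ((applyMorphism nu)^[k] [w' 0]).length :=
    hw0 ▸ lt_length_iterate_applyMorphism nu_ne_nil (t := [1, 2, 3]) rfl (List.cons_ne_nil _ _)
  refine ⟨fun n => ⟨?_, ?_⟩, fun n => ?_⟩
  · exact hfixw.apply_eq_of_map_iterate hfix0 (by rw [hw0, hv0]; rfl)
      (by rw [hw0, hv0]; rfl) map_fst_nu_nu hlen n
  · exact hfixw.apply_eq_of_map_iterate hfix1 (by rw [hw0, hv1]; rfl)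
      (by rw [hw0, hv1]; rfl) map_snd_fst_nu_nu hlen n
  · refine (hfixw.prefixOfSeq_iterate (n + 2)).rel_of_isChain
      (R := fun x y => Joins (piB' x) (piB' y)) (n := n) ?_ (by have := hlen (n + 2); omega)
    rw [Function.iterate_succ_apply']
    exact isChain_applyMorphism nu_ne_nil isChain_joins_nu joins_getLast_nu_head_nu _
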